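/- Consider the integral program P: maximize ∑_{j,i} d_{ij} x_{ij} over x_{ij} ∈ {0,1} with constraints ∑_j g_{ij} x_{ij} ≤ B_i for each i ∈ [M] and ∑_i x_{ij} ≤ 1 for each j, and its LP relaxation R with x_{ij} ∈ [0,1]. Then any basic optimal solution of R has at most M fractional-support queries (queries j for which some x_{ij} ∈ (0,1)), and hence the integrality gap satisfies opt(R) − opt(P) ≤ M·s_max, where s_max = max_{i,j} d_{ij}. -/

import Mathlib

/-!
A basic optimal solution of the relaxation is an extreme point of the feasible polytope at which the
objective is maximal; such a point exists by Krein–Milman applied to the (compact, exposed) face of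
maximisers. At an extreme point every direction supported on the fractional entries that keeps the
tight constraints tight must vanish, so there are at most as many fractional entries as tight budget
rows plus saturated fractional columns. A fractional column has at least one fractional entry and a
saturated one at least two, so the fractional columns are at most as many as the tight budget rows,
hence at most `M`. Zeroing those columns gives a feasible integral point losing at most `s_max` per
column.
-/

open Finset Filter Topology

theorem exists_ne_zero_forall_eq_zero_of_card_lt {K V κ : Type*} [Field K] [AddCommGroup V]
    [Module K V] [FiniteDimensional K V] [Fintype κ] (L : κ → V →ₗ[K] K)
    (h : Fintype.card κ < Module.finrank K V) : ∃ v ≠ 0, ∀ k, L k v = 0 := by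
  have hker : LinearMap.ker (LinearMap.pi L) ≠ ⊥ :=
    LinearMap.ker_ne_bot_of_finrank_lt (by simpa using h)
  obtain ⟨v, hv, hv0⟩ := Submodule.exists_mem_ne_zero_of_ne_bot hker
  exact ⟨v, hv0, fun k => congrFun (LinearMap.mem_ker.1 hv) k⟩

theorem IsCompact.exists_mem_extremePoints_isMaxOn {E : Type*} [AddCommGroup E] [Module ℝ E]
    [TopologicalSpace E] [T2Space E] [IsTopologicalAddGroup E] [ContinuousSMul ℝ E]
    [LocallyConvexSpace ℝ E] {s : Set E} (hs : IsCompact s) (hne : s.Nonempty)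
    (l : StrongDual ℝ E) : ∃ x ∈ s.extremePoints ℝ, IsMaxOn l s x := by
  have hexp : IsExposed ℝ s {y ∈ s | ∀ z ∈ s, l z ≤ l y} := fun _ => ⟨l, rfl⟩
  obtain ⟨z, hzs, hz⟩ := hs.exists_isMaxOn hne l.continuous.continuousOn
  obtain ⟨x, hx⟩ := (hexp.isCompact hs).extremePoints_nonempty ⟨z, hzs, hz⟩
  exact ⟨x, hexp.isExtreme.extremePoints_subset_extremePoints hx, isMaxOn_iff.2 hx.1.2⟩

theorem eventually_add_mul_le {a b c : ℝ} (hac : a ≤ c) (hb : a = c → b = 0) :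
    ∀ᶠ t in 𝓝 (0 : ℝ), a + t * b ≤ c := by
  rcases hac.eq_or_lt with rfl | hlt
  · simp [hb rfl]
  · have hlim : Tendsto (fun t : ℝ => a + t * b) (𝓝 0) (𝓝 a) := by
      simpa using ((continuous_id.mul continuous_const).const_add a).tendsto (0 : ℝ)
    exact (hlim.eventually (gt_mem_nhds hlt)).mono fun _ => le_of_lt

theorem two_le_card_filter_mem_Ioo {κ : Type*} [Fintype κ] {y : κ → ℝ} (hy : ∀ i, 0 ≤ y i)
    (hsum : ∑ i, y i = 1) {i₀ : κ} (hi₀ : y i₀ ∈ Set.Ioo 0 1) :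
    2 ≤ #{i | y i ∈ Set.Ioo 0 1} := by
  classical
  obtain ⟨i₁, hne, hpos⟩ : ∃ i₁, i₁ ≠ i₀ ∧ 0 < y i₁ := by
    by_contra! h
    have hsingle : ∑ i, y i = y i₀ :=
      sum_eq_single i₀ (fun i _ hi => le_antisymm (h i hi) (hy i)) (by simp)
    linarith [hi₀.2]
  have hlt : y i₁ < 1 := by
    have hpair := sum_le_sum_of_subset_of_nonneg (subset_univ {i₀, i₁}) fun i _ _ => hy i
    rw [sum_pair hne.symm, hsum] at hpair
    linarith [hi₀.1]
  exact one_lt_card.2 ⟨i₀, by simpa using hi₀, i₁, by simpa using ⟨hpos, hlt⟩, hne.symm⟩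

theorem sum_mul_le_of_sum_le_one {κ : Type*} [Fintype κ] {d y : κ → ℝ} {s : ℝ}
    (hd : ∀ i, d i ≤ s) (hs : 0 ≤ s) (hy : ∀ i, 0 ≤ y i) (hsum : ∑ i, y i ≤ 1) :
    ∑ i, d i * y i ≤ s :=
  calc ∑ i, d i * y i ≤ ∑ i, s * y i := sum_le_sum fun i _ => by gcongr; exacts [hy i, hd i]
    _ = s * ∑ i, y i := (mul_sum _ _ _).symm
    _ ≤ s := mul_le_of_le_one_right hs hsum

section ExtremePoints

variable {E : Type*} [AddCommGroup E] [Module ℝ E]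

theorem eq_zero_of_mem_extremePoints_of_eventually_add_smul_mem {s : Set E} {x v : E}
    (hx : x ∈ s.extremePoints ℝ) (hv : ∀ᶠ t in 𝓝 (0 : ℝ), x + t • v ∈ s) : v = 0 := by
  obtain ⟨ε, hε, hball⟩ := Metric.eventually_nhds_iff.1 hv
  have hmem : ∀ t : ℝ, |t| = ε / 2 → x + t • v ∈ s := fun t ht =>
    hball (by rw [Real.dist_eq, sub_zero, ht]; linarith)
  have hseg : x ∈ openSegment ℝ (x + (ε / 2) • v) (x + (-(ε / 2)) • v) :=
    ⟨1 / 2, 1 / 2, by norm_num, by norm_num, by norm_num, by module⟩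
  have hfix : x + (ε / 2) • v = x :=
    hx.2 (hmem _ (abs_of_pos (by positivity)))
      (hmem _ (by rw [abs_neg, abs_of_pos (by positivity)])) hseg
  have hε2 : ε / 2 ≠ 0 := by positivity
  simpa [hε2] using hfix

theorem eq_zero_of_mem_extremePoints_polyhedron {κ : Type*} [Finite κ] (a : κ → E →ₗ[ℝ] ℝ)
    (b : κ → ℝ) {x v : E} (hx : x ∈ {y | ∀ k, a k y ≤ b k}.extremePoints ℝ)
    (hv : ∀ k, a k x = b k → a k v = 0) : v = 0 := by
  refine eq_zero_of_mem_extremePoints_of_eventually_add_smul_mem hx ?_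
  refine eventually_all.2 fun k => ?_
  simpa using eventually_add_mul_le (hx.1 k) (hv k)

end ExtremePoints

namespace RoutingLP

section Functionals

variable {ι Q : Type*}

def entry (i : ι) (j : Q) : (ι → Q → ℝ) →ₗ[ℝ] ℝ :=
  (LinearMap.proj j : (Q → ℝ) →ₗ[ℝ] ℝ) ∘ₗ LinearMap.proj i

@[simp] theorem entry_apply (i : ι) (j : Q) (x : ι → Q → ℝ) : entry i j x = x i j := rfl

def load [Fintype Q] (g : ι → Q → ℝ) (i : ι) : (ι → Q → ℝ) →ₗ[ℝ] ℝ := ∑ j, g i j • entry i j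

@[simp] theorem load_apply [Fintype Q] (g : ι → Q → ℝ) (i : ι) (x : ι → Q → ℝ) :
    load g i x = ∑ j, g i j * x i j := by
  simp [load]

def columnSum [Fintype ι] (j : Q) : (ι → Q → ℝ) →ₗ[ℝ] ℝ := ∑ i, entry i j

@[simp] theorem columnSum_apply [Fintype ι] (j : Q) (x : ι → Q → ℝ) :
    columnSum j x = ∑ i, x i j := by
  simp [columnSum]

def objective [Fintype ι] [Fintype Q] (d : ι → Q → ℝ) : (ι → Q → ℝ) →ₗ[ℝ] ℝ :=
  ∑ j, ∑ i, d i j • entry i j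

@[simp] theorem objective_apply [Fintype ι] [Fintype Q] (d x : ι → Q → ℝ) :
    objective d x = ∑ j, ∑ i, d i j * x i j := by
  simp [objective]

end Functionals

variable {ι Q : Type*} [Fintype ι] [Fintype Q] {g : ι → Q → ℝ} {B : ι → ℝ} {x : ι → Q → ℝ}

/-- The rows of the relaxation written as `A x ≤ b`: the lower and upper bound of each entry, the
budget of each resource and the capacity of each query. -/
def constraint (g : ι → Q → ℝ) : (ι × Q) ⊕ (ι × Q) ⊕ ι ⊕ Q → (ι → Q → ℝ) →ₗ[ℝ] ℝ
  | .inl p => -entry p.1 p.2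
  | .inr (.inl p) => entry p.1 p.2
  | .inr (.inr (.inl i)) => load g i
  | .inr (.inr (.inr j)) => columnSum j

def bound (B : ι → ℝ) : (ι × Q) ⊕ (ι × Q) ⊕ ι ⊕ Q → ℝ
  | .inl _ => 0
  | .inr (.inl _) => 1
  | .inr (.inr (.inl i)) => B i
  | .inr (.inr (.inr _)) => 1

def relaxedPolytope (g : ι → Q → ℝ) (B : ι → ℝ) : Set (ι → Q → ℝ) :=
  {x | ∀ k, constraint g k x ≤ bound B k}

theorem mem_relaxedPolytope :
    x ∈ relaxedPolytope g B ↔ (∀ i j, x i j ∈ Set.Icc (0 : ℝ) 1) ∧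
      (∀ i, ∑ j, g i j * x i j ≤ B i) ∧ ∀ j, ∑ i, x i j ≤ 1 := by
  simp only [relaxedPolytope, Set.mem_ofPred_eq, Sum.forall, Prod.forall, constraint, bound,
    LinearMap.neg_apply, entry_apply, load_apply, columnSum_apply, neg_nonpos, Set.mem_Icc,
    forall_and, and_assoc]

theorem isCompact_relaxedPolytope : IsCompact (relaxedPolytope g B) := by
  have hclosed : IsClosed (relaxedPolytope g B) := by
    simp only [relaxedPolytope, Set.ofPred_forall]
    exact isClosed_iInter fun k =>
      isClosed_le (constraint g k).continuous_of_finiteDimensional continuous_const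
  refine (isCompact_univ_pi fun _ => isCompact_univ_pi fun _ =>
    isCompact_Icc (a := (0 : ℝ)) (b := 1)).of_isClosed_subset hclosed fun y hy => ?_
  simpa only [Set.mem_pi, Set.mem_univ, forall_const] using (mem_relaxedPolytope.1 hy).1

open Classical in
noncomputable def fractionalEntries (x : ι → Q → ℝ) : Finset (ι × Q) :=
  {p | x p.1 p.2 ∈ Set.Ioo 0 1}

open Classical in
noncomputable def fractionalQueries (x : ι → Q → ℝ) : Finset Q :=
  {j | ∃ i, x i j ∈ Set.Ioo 0 1}

open Classical in
noncomputable def saturatedFractionalQueries (x : ι → Q → ℝ) : Finset Q :=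
  {j | (∃ i, x i j ∈ Set.Ioo 0 1) ∧ ∑ i, x i j = 1}

open Classical in
noncomputable def tightBudgets (g : ι → Q → ℝ) (B : ι → ℝ) (x : ι → Q → ℝ) : Finset ι :=
  {i | ∑ j, g i j * x i j = B i}

@[simp] theorem mem_fractionalEntries {p : ι × Q} :
    p ∈ fractionalEntries x ↔ x p.1 p.2 ∈ Set.Ioo 0 1 := by
  simp [fractionalEntries]

@[simp] theorem mem_fractionalQueries {j : Q} :
    j ∈ fractionalQueries x ↔ ∃ i, x i j ∈ Set.Ioo 0 1 := by
  simp [fractionalQueries]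

theorem coe_fractionalQueries :
    (fractionalQueries x : Set Q) = {j | ∃ i, x i j ∈ Set.Ioo 0 1} := by
  ext
  simp

@[simp] theorem mem_saturatedFractionalQueries {j : Q} :
    j ∈ saturatedFractionalQueries x ↔ (∃ i, x i j ∈ Set.Ioo 0 1) ∧ ∑ i, x i j = 1 := by
  simp [saturatedFractionalQueries]

@[simp] theorem mem_tightBudgets {i : ι} :
    i ∈ tightBudgets g B x ↔ ∑ j, g i j * x i j = B i := by
  simp [tightBudgets]

/-- A saturated but integral column imposes nothing on a direction supported on the fractional
entries, so only saturated fractional columns need to be counted. -/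
theorem card_fractionalEntries_le (hx : x ∈ (relaxedPolytope g B).extremePoints ℝ) :
    #(fractionalEntries x) ≤ #(tightBudgets g B x) + #(saturatedFractionalQueries x) := by
  classical
  by_contra! hlt
  set S := fractionalEntries x
  let L : tightBudgets g B x ⊕ saturatedFractionalQueries x ⊕ (Sᶜ : Finset (ι × Q)) →
      (ι → Q → ℝ) →ₗ[ℝ] ℝ :=
    Sum.elim (fun i => load g i) (Sum.elim (fun j => columnSum j) fun p => entry p.1.1 p.1.2)
  have hcard : Fintype.card (tightBudgets g B x ⊕ saturatedFractionalQueries x ⊕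
      (Sᶜ : Finset (ι × Q))) < Module.finrank ℝ (ι → Q → ℝ) := by
    have := S.card_add_card_compl
    simp only [Fintype.card_sum, Fintype.card_coe, Module.finrank_pi_fintype,
      Module.finrank_self, sum_const, card_univ, smul_eq_mul,
      Fintype.card_prod, mul_one] at this ⊢
    omega
  obtain ⟨v, hv0, hv⟩ := exists_ne_zero_forall_eq_zero_of_card_lt L hcard
  have hoff : ∀ i j, x i j ∉ Set.Ioo 0 1 → v i j = 0 := fun i j h =>
    hv (.inr (.inr ⟨(i, j), by simpa [S] using h⟩))
  refine hv0 (eq_zero_of_mem_extremePoints_polyhedron _ _ hx ?_)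
  rintro (⟨i, j⟩ | ⟨i, j⟩ | i | j) htight <;>
    simp only [constraint, bound, LinearMap.neg_apply, entry_apply, load_apply, columnSum_apply,
      neg_eq_zero] at htight ⊢
  · exact hoff i j (by simp [htight])
  · exact hoff i j (by simp [htight])
  · simpa [L] using hv (.inl ⟨i, mem_tightBudgets.2 htight⟩)
  · by_cases hj : ∃ i, x i j ∈ Set.Ioo 0 1
    · simpa [L] using hv (.inr (.inl ⟨j, mem_saturatedFractionalQueries.2 ⟨hj, htight⟩⟩))
    · simpa using sum_eq_zero fun i _ => hoff i j (not_exists.1 hj i)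

theorem card_fractionalQueries_add_card_saturatedFractionalQueries_le (hx : ∀ i j, 0 ≤ x i j) :
    #(fractionalQueries x) + #(saturatedFractionalQueries x) ≤ #(fractionalEntries x) := by
  classical
  have hcol : ∀ j, ((if ∃ i, x i j ∈ Set.Ioo 0 1 then 1 else 0) +
      if (∃ i, x i j ∈ Set.Ioo 0 1) ∧ ∑ i, x i j = 1 then 1 else 0) ≤
      #{i | x i j ∈ Set.Ioo 0 1} := by
    intro j
    by_cases hfrac : ∃ i, x i j ∈ Set.Ioo 0 1
    · obtain ⟨i₀, hi₀⟩ := id hfrac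
      rw [if_pos hfrac]
      by_cases hsat : ∑ i, x i j = 1
      · rw [if_pos ⟨hfrac, hsat⟩]
        exact two_le_card_filter_mem_Ioo (hx · j) hsat hi₀
      · rw [if_neg fun h => hsat h.2]
        exact card_pos.2 ⟨i₀, by simpa using hi₀⟩
    · rw [if_neg hfrac, if_neg fun h => hfrac h.1]
      exact Nat.zero_le _
  calc #(fractionalQueries x) + #(saturatedFractionalQueries x)
      = ∑ j, ((if ∃ i, x i j ∈ Set.Ioo 0 1 then 1 else 0) +
          if (∃ i, x i j ∈ Set.Ioo 0 1) ∧ ∑ i, x i j = 1 then 1 else 0) := by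
        simp only [fractionalQueries, saturatedFractionalQueries, card_filter, sum_add_distrib]
    _ ≤ ∑ j, #{i | x i j ∈ Set.Ioo 0 1} := sum_le_sum fun j _ => hcol j
    _ = #(fractionalEntries x) := by
        simp only [fractionalEntries, card_filter, Fintype.sum_prod_type_right]

theorem card_fractionalQueries_le_of_mem_extremePoints
    (hx : x ∈ (relaxedPolytope g B).extremePoints ℝ) :
    #(fractionalQueries x) ≤ Fintype.card ι := by
  have hvertex := card_fractionalEntries_le hx
  have hcount := card_fractionalQueries_add_card_saturatedFractionalQueries_le fun i j =>
    ((mem_relaxedPolytope.1 hx.1).1 i j).1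
  have hbudgets := (tightBudgets g B x).card_le_univ
  omega

theorem mem_relaxedPolytope_of_le (hg : ∀ i j, 0 ≤ g i j) (hx : x ∈ relaxedPolytope g B)
    {y : ι → Q → ℝ} (hy : ∀ i j, 0 ≤ y i j) (hyx : ∀ i j, y i j ≤ x i j) :
    y ∈ relaxedPolytope g B := by
  obtain ⟨hx01, hxB, hxcol⟩ := mem_relaxedPolytope.1 hx
  refine mem_relaxedPolytope.2 ⟨fun i j => ⟨hy i j, (hyx i j).trans (hx01 i j).2⟩,
    fun i => le_trans ?_ (hxB i), fun j => le_trans ?_ (hxcol j)⟩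
  · exact sum_le_sum fun j _ => mul_le_mul_of_nonneg_left (hyx i j) (hg i j)
  · exact sum_le_sum fun i _ => hyx i j

open Classical in
noncomputable def roundDown (x : ι → Q → ℝ) : ι → Q → ℝ :=
  fun i j => if j ∈ fractionalQueries x then 0 else x i j

theorem roundDown_eq_zero_or_one (hx : ∀ i j, x i j ∈ Set.Icc (0 : ℝ) 1) (i : ι) (j : Q) :
    roundDown x i j = 0 ∨ roundDown x i j = 1 := by
  by_cases hj : j ∈ fractionalQueries x
  · simp [roundDown, hj]
  · have hint : x i j ∉ Set.Ioo 0 1 := fun h => hj (mem_fractionalQueries.2 ⟨i, h⟩)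
    simp only [roundDown, hj, if_false]
    rcases (hx i j).1.eq_or_lt with h0 | h0
    · exact .inl h0.symm
    · exact .inr (by_contra fun h1 => hint ⟨h0, lt_of_le_of_ne (hx i j).2 h1⟩)

theorem roundDown_mem_relaxedPolytope (hg : ∀ i j, 0 ≤ g i j) (hx : x ∈ relaxedPolytope g B) :
    roundDown x ∈ relaxedPolytope g B := by
  have hx01 := (mem_relaxedPolytope.1 hx).1
  refine mem_relaxedPolytope_of_le hg hx (fun i j => ?_) fun i j => ?_ <;>
    by_cases hj : j ∈ fractionalQueries x <;> simp [roundDown, hj, (hx01 i j).1]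

theorem objective_sub_objective_roundDown_le {d : ι → Q → ℝ} {s : ℝ} (hd : ∀ i j, d i j ≤ s)
    (hs : 0 ≤ s) (hx : x ∈ relaxedPolytope g B) :
    objective d x - objective d (roundDown x) ≤ #(fractionalQueries x) * s := by
  classical
  obtain ⟨hx01, -, hxcol⟩ := mem_relaxedPolytope.1 hx
  have hcol : ∀ j, ∑ i, d i j * x i j - ∑ i, d i j * roundDown x i j ≤
      if j ∈ fractionalQueries x then s else 0 := by
    intro j
    by_cases hj : j ∈ fractionalQueries x
    · simpa [roundDown, hj] using
        sum_mul_le_of_sum_le_one (hd · j) hs (fun i => (hx01 i j).1) (hxcol j)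
    · simp [roundDown, hj]
  calc objective d x - objective d (roundDown x)
      = ∑ j, (∑ i, d i j * x i j - ∑ i, d i j * roundDown x i j) := by
        simp only [objective_apply, sum_sub_distrib]
    _ ≤ ∑ j, if j ∈ fractionalQueries x then s else 0 := sum_le_sum fun j _ => hcol j
    _ = #(fractionalQueries x) * s := by
        rw [sum_ite_mem, univ_inter, sum_const, nsmul_eq_mul]

end RoutingLP

open RoutingLP

theorem stmt14 (M : ℕ) (Q : Type*) [Fintype Q]
    (d g : Fin M → Q → ℝ) (B : Fin M → ℝ)
    (hd : ∀ i j, 0 ≤ d i j) (hg : ∀ i j, 0 ≤ g i j)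
    (smax optP optR : ℝ)
    (hsmax : IsGreatest {v | ∃ i j, v = d i j} smax)
    (hP : IsGreatest {v | ∃ x : Fin M → Q → ℝ,
      (∀ i j, x i j = 0 ∨ x i j = 1) ∧ (∀ i, ∑ j, g i j * x i j ≤ B i) ∧
      (∀ j, ∑ i, x i j ≤ 1) ∧ v = ∑ j, ∑ i, d i j * x i j} optP)
    (hR : IsGreatest {v | ∃ x : Fin M → Q → ℝ,
      (∀ i j, x i j ∈ Set.Icc (0:ℝ) 1) ∧ (∀ i, ∑ j, g i j * x i j ≤ B i) ∧
      (∀ j, ∑ i, x i j ≤ 1) ∧ v = ∑ j, ∑ i, d i j * x i j} optR) :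
    (∃ x : Fin M → Q → ℝ,
      (∀ i j, x i j ∈ Set.Icc (0:ℝ) 1) ∧ (∀ i, ∑ j, g i j * x i j ≤ B i) ∧
      (∀ j, ∑ i, x i j ≤ 1) ∧ (∑ j, ∑ i, d i j * x i j) = optR ∧
      (({j | ∃ i, x i j ∈ Set.Ioo (0:ℝ) 1} : Set Q).ncard ≤ M)) ∧
    optR - optP ≤ (M : ℝ) * smax := by
  obtain ⟨xR, hxR01, hxRB, hxRcol, hxRval⟩ := hR.1
  have hxR : xR ∈ relaxedPolytope g B := mem_relaxedPolytope.2 ⟨hxR01, hxRB, hxRcol⟩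
  obtain ⟨x, hxext, hxmax⟩ := isCompact_relaxedPolytope.exists_mem_extremePoints_isMaxOn
    ⟨xR, hxR⟩ (objective d).toContinuousLinearMap
  obtain ⟨hx01, hxB, hxcol⟩ := mem_relaxedPolytope.1 hxext.1
  have hxval : objective d x = optR := le_antisymm
    (hR.2 ⟨x, hx01, hxB, hxcol, objective_apply d x⟩)
    (by simpa [hxRval] using hxmax hxR)
  have hcard : #(fractionalQueries x) ≤ M := by
    simpa using card_fractionalQueries_le_of_mem_extremePoints hxext
  have hdmax : ∀ i j, d i j ≤ smax := fun i j => hsmax.2 ⟨i, j, rfl⟩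
  have hsmax0 : 0 ≤ smax := by
    obtain ⟨i, j, hij⟩ := hsmax.1
    exact hij ▸ hd i j
  obtain ⟨-, hroundB, hroundcol⟩ :=
    mem_relaxedPolytope.1 (roundDown_mem_relaxedPolytope hg hxext.1)
  have hround : objective d (roundDown x) ≤ optP := by
    rw [objective_apply]
    exact hP.2 ⟨roundDown x, roundDown_eq_zero_or_one hx01, hroundB, hroundcol, rfl⟩
  refine ⟨⟨x, hx01, hxB, hxcol, by simpa using hxval,
    by rwa [← coe_fractionalQueries, Set.ncard_coe_finset]⟩, ?_⟩
  calc optR - optP ≤ objective d x - objective d (roundDown x) := by linarith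
    _ ≤ #(fractionalQueries x) * smax := objective_sub_objective_roundDown_le hdmax hsmax0 hxext.1
    _ ≤ M * smax := by gcongr
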